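/- arXiv:1408.0822 — 2 statements merged into one kernel-verified Lean document; each statement's English description precedes it below -/
import Mathlib

section
/- Let X be a reversible Markov chain with finite state space S and stationary distribution π. Then for any state x with π(x) > 0, the sum over all states y of the maximal transition probability p*(x, y) satisfies Σ_{y ∈ S} p*(x, y) ≤ 2e · max(1, log(1/π(x))). -/
open Finset

/-- A (row-)stochastic transition matrix: the transition kernel of a Markov chain
on the finite state space `S`. -/
def IsStochastic {S : Type*} [Fintype S] (p : Matrix S S ℝ) : Prop :=
  (∀ a b, 0 ≤ p a b) ∧ ∀ a, ∑ b, p a b = 1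

/-- `π` is a stationary distribution for the transition matrix `p`. -/
def IsStationaryDistribution {S : Type*} [Fintype S] (p : Matrix S S ℝ) (π : S → ℝ) : Prop :=
  (∀ a, 0 ≤ π a) ∧ (∑ a, π a = 1) ∧ ∀ b, ∑ a, π a * p a b = π b

/-- The chain with transition matrix `p` is reversible with respect to `π`. -/
def IsReversible {S : Type*} [Fintype S] (p : Matrix S S ℝ) (π : S → ℝ) : Prop :=
  ∀ a b, π a * p a b = π b * p b a

/-- `p*(x, y) = sup_{t ≥ 0} p^t(x, y)`, the maximal transition probability from `x` to `y`. -/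
noncomputable def maxProb {S : Type*} [Fintype S] [DecidableEq S]
    (p : Matrix S S ℝ) (x y : S) : ℝ :=
  ⨆ t : ℕ, (p ^ t) x y

open Matrix

/-!
Put `f = 𝟙_x / π x`. Reversibility gives `π y * (P^t f) y = p^t(x, y)`; writing `t = 2n + k`
with `k ∈ {0, 1}` and `g = P^k f`, reversibility again gives
`π y * (P^(2n) g) y = E_π[(P^n g)(X_(T-n)); X_T = y]` for the stationary chain `X_0, …, X_T`.
Hence each parity class contributes at most `E_π[max_i (P^(T-i) g)(X_i)]`.
The process `(P^(T-i) g)(X_i)` is a martingale of mean `π ⬝ g = 1` bounded by `C = 1 / π x`, so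
Doob's inequality `P(max > t) ≤ 1 / t` and a layer-cake sum over the geometric levels
`C^(k/K)`, `K = ⌊log C⌋ + 1`, bound this expectation by `1 + (e - 1) log C ≤ e max(1, log C)`.
-/

section MarkovChain

variable {S : Type*} {p : Matrix S S ℝ} {π : S → ℝ}

section Stochastic

variable [Fintype S] [DecidableEq S]

namespace IsStochastic

lemma mem_rowStochastic (hp : IsStochastic p) : p ∈ rowStochastic ℝ S :=
  mem_rowStochastic_iff_sum.2 hp

lemma pow (hp : IsStochastic p) (n : ℕ) : IsStochastic (p ^ n) :=
  mem_rowStochastic_iff_sum.1 (pow_mem hp.mem_rowStochastic n)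

lemma mulVec_one (hp : IsStochastic p) : p *ᵥ 1 = 1 :=
  one_vecMul_of_mem_rowStochastic hp.mem_rowStochastic

lemma mulVec_nonneg (hp : IsStochastic p) {v : S → ℝ} (hv : 0 ≤ v) : 0 ≤ p *ᵥ v :=
  nonneg_mulVec_of_mem_rowStochastic hp.mem_rowStochastic hv

lemma mulVec_mono (hp : IsStochastic p) {u v : S → ℝ} (huv : u ≤ v) : p *ᵥ u ≤ p *ᵥ v := by
  simpa [mulVec_sub] using hp.mulVec_nonneg (sub_nonneg.2 huv)

lemma mulVec_single_apply_le (hp : IsStochastic p) {x : S} {c : ℝ} (hc : 0 ≤ c) (z : S) :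
    (p *ᵥ Pi.single x c) z ≤ c := by
  simpa [mulVec_single, MulOpposite.smul_eq_mul_unop] using
    mul_le_of_le_one_left hc (le_one_of_mem_rowStochastic hp.mem_rowStochastic (i := z) (j := x))

end IsStochastic

lemma IsStationaryDistribution.vecMul_pow (hπ : IsStationaryDistribution p π) (n : ℕ) :
    π ᵥ* p ^ n = π := by
  induction n with
  | zero => simp
  | succ n ih => rw [pow_succ, ← vecMul_vecMul, ih]; exact funext hπ.2.2

lemma IsReversible.pow (hrev : IsReversible p π) (n : ℕ) : IsReversible (p ^ n) π := by
  intro a b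
  induction n generalizing a b with
  | zero =>
    rcases eq_or_ne a b with rfl | hab
    · rfl
    · simp [one_apply, hab, hab.symm]
  | succ n ih =>
    conv_lhs => rw [pow_succ]
    conv_rhs => rw [pow_succ']
    rw [mul_apply, mul_apply, mul_sum, mul_sum]
    refine sum_congr rfl fun c _ => ?_
    linear_combination p c b * ih a c + (p ^ n) c a * hrev c b

lemma IsReversible.mul_pow_mulVec_single_one_div (hrev : IsReversible p π) {x : S}
    (hx : π x ≠ 0) (t : ℕ) (y : S) :
    π y * (p ^ t *ᵥ Pi.single x (1 / π x)) y = (p ^ t) x y := by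
  simp only [mulVec_single, Pi.smul_apply, col_apply, MulOpposite.smul_eq_mul_unop,
    MulOpposite.unop_op]
  rw [← mul_assoc, hrev.pow t y x]
  field_simp

end Stochastic

lemma IsReversible.mul_mulVec_apply [Fintype S] (hrev : IsReversible p π) (h : S → ℝ) (y : S) :
    π y * (p *ᵥ h) y = ∑ z, π z * p z y * h z := by
  simp only [mulVec, dotProduct, mul_sum, ← mul_assoc, hrev y]

def pathWeight (p : Matrix S S ℝ) (μ : S → ℝ) {T : ℕ} (ω : Fin (T + 1) → S) : ℝ :=
  μ (ω 0) * ∏ i : Fin T, p (ω i.castSucc) (ω i.succ)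

lemma pathWeight_cons (p : Matrix S S ℝ) (μ : S → ℝ) {T : ℕ} (z : S) (ω : Fin (T + 1) → S) :
    pathWeight p μ (Fin.cons z ω : Fin (T + 2) → S) = μ z * pathWeight p (p z) ω := by
  simp [pathWeight, Fin.prod_univ_succ]

lemma pathWeight_nonneg [Fintype S] (hp : IsStochastic p) {μ : S → ℝ} (hμ : 0 ≤ μ) {T : ℕ}
    (ω : Fin (T + 1) → S) : 0 ≤ pathWeight p μ ω :=
  mul_nonneg (hμ _) (prod_nonneg fun _ _ => hp.1 _ _)

def pathMax (a : ℕ → S → ℝ) {T : ℕ} (ω : Fin (T + 1) → S) : ℝ :=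
  univ.sup' univ_nonempty fun i : Fin (T + 1) => a i (ω i)

section FeynmanKac

variable [Fintype S]

/-- `feynmanKac p T φ z` is the expectation of `∏_{m ≤ T} φ m (X m)` for the chain `X`
started at `z`. -/
def feynmanKac (p : Matrix S S ℝ) : ℕ → (ℕ → S → ℝ) → S → ℝ
  | 0, φ => φ 0
  | T + 1, φ => φ 0 * (p *ᵥ feynmanKac p T fun m => φ (m + 1))

theorem sum_pathWeight_mul_prod (p : Matrix S S ℝ) (μ : S → ℝ) (T : ℕ) (φ : ℕ → S → ℝ) :
    ∑ ω : Fin (T + 1) → S, pathWeight p μ ω * ∏ m : Fin (T + 1), φ m (ω m) =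
      μ ⬝ᵥ feynmanKac p T φ := by
  induction T generalizing μ φ with
  | zero =>
    rw [← (Equiv.funUnique (Fin 1) S).symm.sum_comp]
    simp [pathWeight, feynmanKac, dotProduct]
  | succ T ih =>
    rw [← (Fin.consEquiv fun _ => S).sum_comp, Fintype.sum_prod_type]
    refine sum_congr rfl fun z _ => ?_
    have hcons : ∀ ω : Fin (T + 1) → S,
        pathWeight p μ (Fin.cons z ω : Fin (T + 2) → S) *
            ∏ m : Fin (T + 2), φ m ((Fin.cons z ω : Fin (T + 2) → S) m) =
          μ z * φ 0 z * (pathWeight p (p z) ω * ∏ m : Fin (T + 1), φ (m + 1) (ω m)) := by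
      intro ω
      rw [pathWeight_cons, Fin.prod_univ_succ]
      simp only [Fin.cons_zero, Fin.cons_succ, Fin.val_zero, Fin.val_succ]
      ring
    simp only [Fin.consEquiv, Equiv.coe_fn_mk, hcons, ← mul_sum]
    rw [ih (p z) fun m => φ (m + 1)]
    simp only [feynmanKac, Pi.mul_apply, mulVec]
    ring

variable [DecidableEq S]

lemma feynmanKac_add {φ : ℕ → S → ℝ} {k : ℕ} (h : ∀ m < k, φ m = 1) (T : ℕ) :
    feynmanKac p (T + k) φ = p ^ k *ᵥ feynmanKac p T fun m => φ (m + k) := by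
  induction k generalizing φ with
  | zero => simp
  | succ k ih =>
    rw [← add_assoc, feynmanKac, h 0 k.succ_pos, one_mul,
      ih fun m hm => h (m + 1) (by omega), mulVec_mulVec, ← pow_succ']
    simp only [add_assoc]

lemma IsStochastic.feynmanKac_one (hp : IsStochastic p) (T : ℕ) :
    feynmanKac p T (fun _ _ => 1) = 1 := by
  simpa [feynmanKac] using
    feynmanKac_add (p := p) (φ := fun _ _ => 1) (k := T) (fun _ _ => rfl) 0
    |>.trans ((hp.pow T).mulVec_one)

lemma IsStochastic.sum_pathWeight (hp : IsStochastic p) (μ : S → ℝ) (T : ℕ) :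
    ∑ ω : Fin (T + 1) → S, pathWeight p μ ω = ∑ z, μ z := by
  simpa [hp.feynmanKac_one, dotProduct] using sum_pathWeight_mul_prod p μ T fun _ _ => 1

theorem sum_pathWeight_mul_mul_last (μ : S → ℝ) {T : ℕ} (j : Fin (T + 1))
    (b c : S → ℝ) :
    ∑ ω : Fin (T + 1) → S, pathWeight p μ ω * (b (ω j) * c (ω (Fin.last T))) =
      (μ ᵥ* p ^ (j : ℕ)) ⬝ᵥ (b * (p ^ (T - j) *ᵥ c)) := by
  set φ : ℕ → S → ℝ := fun m z => (if m = j then b z else 1) * (if m = T then c z else 1)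
  have hprod : ∀ ω : Fin (T + 1) → S,
      ∏ m : Fin (T + 1), φ m (ω m) = b (ω j) * c (ω (Fin.last T)) := by
    intro ω
    have hlast : ∀ m : Fin (T + 1), (m : ℕ) = T ↔ m = Fin.last T := fun m => by
      simp [Fin.ext_iff]
    simp only [φ, prod_mul_distrib, Fin.val_inj, hlast]
    rw [Fintype.prod_ite_eq', Fintype.prod_ite_eq']
  obtain ⟨n, hn⟩ : ∃ n, T = n + j := ⟨T - j, by omega⟩
  have hshift := feynmanKac_add (p := p) (φ := φ) (k := j)
    (fun m hm => funext fun z => by simp [φ, hm.ne, show m ≠ T by omega]) n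
  rw [← hn] at hshift
  have htail : feynmanKac p n (fun m => φ (m + j)) = b * (p ^ n *ᵥ c) := by
    cases n with
    | zero => simp [feynmanKac, φ, hn]; rfl
    | succ n =>
      have hmid := feynmanKac_add (p := p) (φ := fun m => φ (m + 1 + j)) (k := n)
        (fun m hm => funext fun z => by simp [φ, show m + 1 + (j : ℕ) ≠ T by omega]) 0
      have hφj : φ j = b := funext fun z => by simp [φ, show (j : ℕ) ≠ T by omega]
      have hφT : φ T = c := funext fun z => by simp [φ, show T ≠ (j : ℕ) by omega]
      rw [zero_add] at hmid
      simp only [feynmanKac, zero_add] at hmid ⊢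
      rw [hmid, mulVec_mulVec, ← pow_succ', show n + 1 + (j : ℕ) = T by omega, hφj, hφT]
  rw [sum_congr rfl fun ω _ => by rw [← hprod ω], sum_pathWeight_mul_prod, hshift,
    htail, dotProduct_mulVec, show T - j = n by omega]

/-- `1 - feynmanKac p T φ` is the probability that `t < a m (X m)` for some `m ≤ T`;
stopping `a m (X m)` at the first such `m` gives the bound (optional stopping). -/
lemma IsStochastic.smul_one_sub_feynmanKac_le (hp : IsStochastic p) (t : ℝ)
    (T : ℕ) {a : ℕ → S → ℝ} (ha : ∀ m, 0 ≤ a m) (hharm : ∀ m < T, a m = p *ᵥ a (m + 1)) :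
    t • (1 - feynmanKac p T fun m z => if a m z ≤ t then 1 else 0) ≤ a 0 := by
  induction T generalizing a with
  | zero =>
    intro z
    have h0 : 0 ≤ a 0 z := ha 0 z
    by_cases h : a 0 z ≤ t <;> simp [feynmanKac, h] <;> linarith
  | succ T ih =>
    have hnext := hp.mulVec_mono (ih (a := fun m => a (m + 1)) (fun m => ha _)
      fun m hm => hharm _ (by omega))
    rw [mulVec_smul, mulVec_sub, hp.mulVec_one, ← hharm 0 T.succ_pos] at hnext
    intro z
    by_cases h : a 0 z ≤ t
    · simpa [feynmanKac, h] using hnext z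
    · simp [feynmanKac, h]; linarith

theorem IsStochastic.mul_sum_pathWeight_lt_pathMax_le (hp : IsStochastic p)
    {μ : S → ℝ} (hμ : 0 ≤ μ) {T : ℕ} {a : ℕ → S → ℝ} (ha : ∀ m, 0 ≤ a m)
    (hharm : ∀ m < T, a m = p *ᵥ a (m + 1)) (t : ℝ) :
    t * ∑ ω : Fin (T + 1) → S with t < pathMax a ω, pathWeight p μ ω ≤ μ ⬝ᵥ a 0 := by
  set φ : ℕ → S → ℝ := fun m z => if a m z ≤ t then 1 else 0
  have hind : ∀ ω : Fin (T + 1) → S,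
      (if t < pathMax a ω then 1 else 0) = 1 - ∏ m : Fin (T + 1), φ m (ω m) := by
    intro ω
    by_cases h : t < pathMax a ω
    · obtain ⟨i, -, hi⟩ := (lt_sup'_iff _).1 h
      rw [if_pos h, prod_eq_zero (mem_univ i) (by simp [φ, hi]), sub_zero]
    · have hle := (sup'_le_iff _ _).1 (not_lt.1 h)
      rw [if_neg h, prod_eq_one fun i _ => by simp [φ, hle i (mem_univ i)], sub_self]
  have hsum : ∑ ω : Fin (T + 1) → S with t < pathMax a ω, pathWeight p μ ω =
      μ ⬝ᵥ (1 - feynmanKac p T φ) := by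
    rw [sum_filter, dotProduct_sub, ← sum_pathWeight_mul_prod, dotProduct_one,
      ← hp.sum_pathWeight μ T, ← sum_sub_distrib]
    refine sum_congr rfl fun ω _ => ?_
    rw [← mul_one (pathWeight p μ ω), mul_assoc, one_mul, ← mul_sub, ← hind]
    split_ifs <;> simp
  rw [hsum, ← smul_eq_mul, ← dotProduct_smul]
  exact dotProduct_le_dotProduct_of_nonneg_left (hp.smul_one_sub_feynmanKac_le t T ha hharm) hμ

theorem sum_mul_pow_two_mul_mulVec_le_sum_pathMax (hp : IsStochastic p)
    (hπ : IsStationaryDistribution p π) (hrev : IsReversible p π) (g : S → ℝ) {T : ℕ}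
    (n : S → ℕ) (hn : ∀ y, n y ≤ T) :
    ∑ y, π y * (p ^ (2 * n y) *ᵥ g) y ≤
      ∑ ω : Fin (T + 1) → S, pathWeight p π ω * pathMax (fun i => p ^ (T - i) *ᵥ g) ω := by
  set a : ℕ → S → ℝ := fun i => p ^ (T - i) *ᵥ g
  set j : S → Fin (T + 1) := fun y => ⟨T - n y, by omega⟩
  have hpoint : ∀ y, π y * (p ^ (2 * n y) *ᵥ g) y = ∑ ω : Fin (T + 1) → S,
      pathWeight p π ω * (a (j y) (ω (j y)) * (Pi.single y 1 : S → ℝ) (ω (Fin.last T))) := by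
    intro y
    rw [sum_pathWeight_mul_mul_last, hπ.vecMul_pow, two_mul, pow_add, ← mulVec_mulVec,
      (hrev.pow _).mul_mulVec_apply, mulVec_single_one]
    simp only [a, j, Nat.sub_sub_self (hn y), dotProduct, Pi.mul_apply, col_apply]
    exact sum_congr rfl fun z _ => by ring
  calc ∑ y, π y * (p ^ (2 * n y) *ᵥ g) y
      = ∑ ω : Fin (T + 1) → S, pathWeight p π ω *
          ∑ y, a (j y) (ω (j y)) * (Pi.single y 1 : S → ℝ) (ω (Fin.last T)) := by
        simp only [hpoint, mul_sum]
        exact sum_comm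
    _ ≤ ∑ ω : Fin (T + 1) → S, pathWeight p π ω * pathMax a ω := by
        refine sum_le_sum fun ω _ =>
          mul_le_mul_of_nonneg_left ?_ (pathWeight_nonneg hp hπ.1 ω)
        simp only [Pi.single_apply, mul_ite, mul_one, mul_zero, sum_ite_eq, mem_univ, if_true]
        exact le_sup' (fun i : Fin (T + 1) => a i (ω i)) (mem_univ _)

end FeynmanKac

lemma le_min_one_add_sum_pow_sub_pow_mul_ite {a r : ℝ} {K : ℕ} (ha : a ≤ r ^ K) :
    a ≤ min a 1 + ∑ k ∈ range K, (r ^ (k + 1) - r ^ k) * if r ^ k < a then 1 else 0 := by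
  have htel : ∑ k ∈ range K, (min a (r ^ (k + 1)) - min a (r ^ k)) = a - min a 1 := by
    rw [sum_range_sub (fun k => min a (r ^ k)), pow_zero, min_eq_left ha]
  have hstep : ∀ k, min a (r ^ (k + 1)) - min a (r ^ k) ≤
      (r ^ (k + 1) - r ^ k) * if r ^ k < a then 1 else 0 := by
    intro k
    by_cases h : r ^ k < a
    · rw [if_pos h, mul_one, min_eq_right h.le]
      linarith [min_le_right a (r ^ (k + 1))]
    · rw [if_neg h, mul_zero, min_eq_left (not_lt.1 h)]
      linarith [min_le_left a (r ^ (k + 1))]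
  linarith [sum_le_sum fun k (_ : k ∈ range K) => hstep k]

theorem sum_mul_le_one_add_mul_sub_one {Ω : Type*} [Fintype Ω] {w M : Ω → ℝ} (hw : 0 ≤ w)
    (hmass : ∑ ω, w ω ≤ 1) (htail : ∀ t, 0 < t → t * ∑ ω with t < M ω, w ω ≤ 1) {r : ℝ}
    (hr : 1 ≤ r) {K : ℕ} (hM : ∀ ω, M ω ≤ r ^ K) :
    ∑ ω, w ω * M ω ≤ 1 + K * (r - 1) := by
  set layer : ℕ → Ω → ℝ := fun k ω => if r ^ k < M ω then 1 else 0
  have hlayer_mass : ∀ k, (r ^ (k + 1) - r ^ k) * ∑ ω, w ω * layer k ω ≤ r - 1 := by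
    intro k
    have hrk : 0 < r ^ k := pow_pos (by linarith) k
    have := htail _ hrk
    rw [sum_filter] at this
    calc (r ^ (k + 1) - r ^ k) * ∑ ω, w ω * layer k ω
        = (r - 1) * (r ^ k * ∑ ω, if r ^ k < M ω then w ω else 0) := by
          simp only [layer, mul_ite, mul_one, mul_zero, pow_succ]; ring
      _ ≤ (r - 1) * 1 := mul_le_mul_of_nonneg_left this (by linarith)
      _ = r - 1 := mul_one _
  calc ∑ ω, w ω * M ω
      ≤ ∑ ω, w ω * (min (M ω) 1 + ∑ k ∈ range K, (r ^ (k + 1) - r ^ k) * layer k ω) :=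
        sum_le_sum fun ω _ =>
          mul_le_mul_of_nonneg_left (le_min_one_add_sum_pow_sub_pow_mul_ite (hM ω)) (hw ω)
    _ = ∑ ω, w ω * min (M ω) 1 +
          ∑ k ∈ range K, (r ^ (k + 1) - r ^ k) * ∑ ω, w ω * layer k ω := by
        simp only [mul_add, sum_add_distrib, mul_sum]
        rw [sum_comm (s := univ)]
        congr 1
        refine sum_congr rfl fun k _ => sum_congr rfl fun ω _ => ?_
        ring
    _ ≤ 1 + ∑ k ∈ range K, (r - 1) := by
        refine add_le_add ?_ (sum_le_sum fun k _ => hlayer_mass k)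
        calc ∑ ω, w ω * min (M ω) 1 ≤ ∑ ω, w ω :=
              sum_le_sum fun ω _ => mul_le_of_le_one_right (hw ω) (min_le_right _ _)
          _ ≤ 1 := hmass
    _ = 1 + K * (r - 1) := by simp [mul_sub]

lemma one_add_mul_exp_div_sub_one_le {L K : ℝ} (hL : 0 ≤ L) (hK : 0 < K) (hLK : L ≤ K) :
    1 + K * (Real.exp (L / K) - 1) ≤ 1 + (Real.exp 1 - 1) * L := by
  set x := L / K
  have hx0 : 0 ≤ x := div_nonneg hL hK.le
  have hx1 : x ≤ 1 := (div_le_one hK).2 hLK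
  have hconv := convexOn_exp.2 (Set.mem_univ 0) (Set.mem_univ 1) (sub_nonneg.2 hx1) hx0
    (sub_add_cancel 1 x)
  simp only [smul_eq_mul, mul_zero, zero_add, mul_one, Real.exp_zero] at hconv
  have hKx : K * x = L := mul_div_cancel₀ L hK.ne'
  calc 1 + K * (Real.exp x - 1) ≤ 1 + K * ((Real.exp 1 - 1) * x) := by
        gcongr; linarith
    _ = 1 + (Real.exp 1 - 1) * L := by rw [← hKx]; ring

lemma one_add_mul_le_exp_one_mul_max (L : ℝ) :
    1 + (Real.exp 1 - 1) * L ≤ Real.exp 1 * max 1 L := by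
  have he : 1 ≤ Real.exp 1 := Real.one_le_exp zero_le_one
  rcases le_total L 1 with h | h
  · rw [max_eq_left h]; nlinarith
  · rw [max_eq_right h]; nlinarith

theorem sum_mul_pow_two_mul_mulVec_le [Fintype S] [DecidableEq S] (hp : IsStochastic p)
    (hπ : IsStationaryDistribution p π) (hrev : IsReversible p π) {g : S → ℝ} (hg : 0 ≤ g)
    (hπg : π ⬝ᵥ g = 1) {C : ℝ} (hC : 1 ≤ C) (hgC : ∀ m z, (p ^ m *ᵥ g) z ≤ C) (n : S → ℕ) :
    ∑ y, π y * (p ^ (2 * n y) *ᵥ g) y ≤ Real.exp 1 * max 1 (Real.log C) := by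
  set T := univ.sup n
  set a : ℕ → S → ℝ := fun i => p ^ (T - i) *ᵥ g
  set L := Real.log C
  set K := ⌊L⌋₊ + 1
  have hL : 0 ≤ L := Real.log_nonneg hC
  have hK : (0 : ℝ) < K := by positivity
  have hLK : L ≤ K := by simpa [K] using (Nat.lt_floor_add_one L).le
  have hrK : Real.exp (L / K) ^ K = C := by
    rw [← Real.exp_nat_mul, mul_div_cancel₀ L hK.ne', Real.exp_log (by linarith)]
  have hharm : ∀ m < T, a m = p *ᵥ a (m + 1) := fun m hm => by
    simp only [a, mulVec_mulVec, ← pow_succ', show T - m = T - (m + 1) + 1 by omega]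
  have htail : ∀ t, 0 < t →
      t * ∑ ω : Fin (T + 1) → S with t < pathMax a ω, pathWeight p π ω ≤ 1 := fun t _ => by
    have := hp.mul_sum_pathWeight_lt_pathMax_le hπ.1 (fun m => (hp.pow _).mulVec_nonneg hg)
      hharm t
    rwa [dotProduct_mulVec, hπ.vecMul_pow, hπg] at this
  calc ∑ y, π y * (p ^ (2 * n y) *ᵥ g) y
      ≤ ∑ ω : Fin (T + 1) → S, pathWeight p π ω * pathMax a ω :=
        sum_mul_pow_two_mul_mulVec_le_sum_pathMax hp hπ hrev g n fun y =>
          le_sup (mem_univ y)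
    _ ≤ 1 + K * (Real.exp (L / K) - 1) :=
        sum_mul_le_one_add_mul_sub_one (pathWeight_nonneg hp hπ.1)
          (by rw [hp.sum_pathWeight, hπ.2.1]) htail (Real.one_le_exp (by positivity))
          fun ω => hrK ▸ sup'_le _ _ fun i _ => hgC _ _
    _ ≤ 1 + (Real.exp 1 - 1) * L := one_add_mul_exp_div_sub_one_le hL hK hLK
    _ ≤ Real.exp 1 * max 1 L := one_add_mul_le_exp_one_mul_max L

lemma pow_apply_le_sum_range_two [Fintype S] [DecidableEq S] (hp : IsStochastic p)
    (hπ : IsStationaryDistribution p π) (hrev : IsReversible p π) {x : S} (hx : 0 < π x)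
    (t : ℕ) (y : S) :
    (p ^ t) x y ≤
      ∑ k ∈ range 2, π y * (p ^ (2 * (t / 2)) *ᵥ (p ^ k *ᵥ Pi.single x (1 / π x))) y := by
  have ht : p ^ t = p ^ (2 * (t / 2)) * p ^ (t % 2) := by rw [← pow_add, Nat.div_add_mod]
  have hf : (0 : S → ℝ) ≤ Pi.single x (1 / π x) := Pi.single_nonneg.2 (by positivity)
  rw [← hrev.mul_pow_mulVec_single_one_div hx.ne', ht, ← mulVec_mulVec]
  exact single_le_sum (f := fun k => π y * (p ^ (2 * (t / 2)) *ᵥ (p ^ k *ᵥ _)) y)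
    (fun k _ => mul_nonneg (hπ.1 y) ((hp.pow _).mulVec_nonneg ((hp.pow k).mulVec_nonneg hf) y))
    (mem_range.2 (Nat.mod_lt _ two_pos))

theorem sum_mul_pow_two_mul_mulVec_pow_mulVec_single_le [Fintype S] [DecidableEq S]
    (hp : IsStochastic p) (hπ : IsStationaryDistribution p π) (hrev : IsReversible p π)
    {x : S} (hx : 0 < π x) (k : ℕ) (n : S → ℕ) :
    ∑ y, π y * (p ^ (2 * n y) *ᵥ (p ^ k *ᵥ Pi.single x (1 / π x))) y ≤
      Real.exp 1 * max 1 (Real.log (1 / π x)) := by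
  have hC : 1 ≤ 1 / π x := (one_le_div hx).2 <| hπ.2.1 ▸
    single_le_sum (fun a _ => hπ.1 a) (mem_univ x)
  refine sum_mul_pow_two_mul_mulVec_le hp hπ hrev
    ((hp.pow k).mulVec_nonneg (Pi.single_nonneg.2 (by positivity)))
    (by rw [dotProduct_mulVec, hπ.vecMul_pow, dotProduct_single, mul_one_div_cancel hx.ne'])
    hC (fun m z => ?_) n
  rw [mulVec_mulVec, ← pow_add]
  exact (hp.pow _).mulVec_single_apply_le (by positivity) z

lemma sum_ciSup_le_of_forall {ι κ : Type*} [DecidableEq ι] [Nonempty κ] (s : Finset ι)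
    {f : ι → κ → ℝ} {B : ℝ} (h : ∀ c : ι → κ, ∑ i ∈ s, f i (c i) ≤ B) :
    ∑ i ∈ s, ⨆ k, f i k ≤ B := by
  induction s using Finset.induction_on generalizing B with
  | empty => simpa using h fun _ => Classical.arbitrary κ
  | insert a s ha ih =>
    have hrest : ∀ k, ∑ i ∈ s, ⨆ k, f i k ≤ B - f a k := fun k => ih fun c => by
      have := h (Function.update c a k)
      rw [sum_insert ha, Function.update_self, sum_congr rfl fun i hi => by
        rw [Function.update_of_ne (ne_of_mem_of_not_mem hi ha)]] at this
      linarith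
    rw [sum_insert ha]
    linarith [ciSup_le fun k => show f a k ≤ B - ∑ i ∈ s, ⨆ k, f i k by linarith [hrest k]]

end MarkovChain

/-- Proposition 4: for a reversible chain with stationary distribution `π` and a state
`x` with `π x > 0`, `Σ_y p*(x, y) ≤ 2e · max(1, log(1/π(x)))`. -/
theorem sum_maxProb_bound {S : Type*} [Fintype S] [DecidableEq S]
    (p : Matrix S S ℝ) (π : S → ℝ)
    (hp : IsStochastic p) (hstat : IsStationaryDistribution p π) (hrev : IsReversible p π)
    (x : S) (hx : 0 < π x) :
    ∑ y, maxProb p x y ≤ 2 * Real.exp 1 * max 1 (Real.log (1 / π x)) := by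
  refine sum_ciSup_le_of_forall _ fun t => ?_
  calc ∑ y, (p ^ t y) x y
      ≤ ∑ y, ∑ k ∈ range 2,
          π y * (p ^ (2 * (t y / 2)) *ᵥ (p ^ k *ᵥ Pi.single x (1 / π x))) y :=
        sum_le_sum fun y _ => pow_apply_le_sum_range_two hp hstat hrev hx (t y) y
    _ = ∑ k ∈ range 2, ∑ y,
          π y * (p ^ (2 * (t y / 2)) *ᵥ (p ^ k *ᵥ Pi.single x (1 / π x))) y := sum_comm
    _ ≤ ∑ k ∈ range 2, Real.exp 1 * max 1 (Real.log (1 / π x)) :=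
        sum_le_sum fun k _ => sum_mul_pow_two_mul_mulVec_pow_mulVec_single_le hp hstat hrev hx k _
    _ = 2 * Real.exp 1 * max 1 (Real.log (1 / π x)) := by simp [mul_assoc]
end

section
/- For any positive integers M and N, (1/3)·√((M+N)/(MN)) · (M+N)^{M+N}/(M^M · N^N) ≤ C(M+N, M) ≤ (1/2)·√((M+N)/(MN)) · (M+N)^{M+N}/(M^M · N^N), where C(M+N, M) denotes the binomial coefficient. -/
/-!
Write `n! = s n * √(2n) * (n / e) ^ n` with `s = Stirling.stirlingSeq`. The sequence `s` decreases
from `s 1 = e / √2` to its limit `√π`, so `C(M+N, M)` equals `s (M+N) / (s M * s N) / √2` times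
`√((M+N)/(MN)) (M+N)^(M+N) / (M^M N^N)`, and that prefactor lies between `√(2π) / e² ≥ 1/3`
and `e / (2π) ≤ 1/2`.
-/

open Real Nat Stirling

namespace Stirling

theorem stirlingSeq_le_exp_one_div_sqrt_two {n : ℕ} (hn : n ≠ 0) :
    stirlingSeq n ≤ exp 1 / √2 := by
  obtain ⟨m, rfl⟩ := exists_eq_succ_of_ne_zero hn
  rw [← stirlingSeq_one]
  exact stirlingSeq'_antitone m.zero_le

theorem stirlingSeq_mem_Icc {n : ℕ} (hn : n ≠ 0) : stirlingSeq n ∈ Set.Icc (√π) (exp 1 / √2) :=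
  ⟨sqrt_pi_le_stirlingSeq hn, stirlingSeq_le_exp_one_div_sqrt_two hn⟩

theorem cast_choose_add_eq_stirlingSeq_div_mul {m n : ℕ} (hm : m ≠ 0) (hn : n ≠ 0) :
    ((m + n).choose m : ℝ) = stirlingSeq (m + n) / (stirlingSeq m * stirlingSeq n) / √2 *
      (√((m + n) / (m * n)) * ((m + n) ^ (m + n) / (m ^ m * n ^ n))) := by
  have hm' : (0 : ℝ) < m := by positivity
  have hn' : (0 : ℝ) < n := by positivity
  rw [cast_choose ℝ (m.le_add_right n), Nat.add_sub_cancel_left]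
  simp only [stirlingSeq, cast_add, sqrt_div (add_pos hm' hn').le, sqrt_mul hm'.le,
    sqrt_mul zero_le_two, div_pow, pow_add]
  field_simp

end Stirling

theorem div_mul_mem_Icc_of_mem_Icc {α : Type*} [Field α] [LinearOrder α] [IsStrictOrderedRing α]
    {a b c lo hi : α} (hlo : 0 < lo)
    (ha : a ∈ Set.Icc lo hi) (hb : b ∈ Set.Icc lo hi) (hc : c ∈ Set.Icc lo hi) :
    a / (b * c) ∈ Set.Icc (lo / hi ^ 2) (hi / lo ^ 2) := by
  obtain ⟨ha₁, ha₂⟩ := ha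
  obtain ⟨hb₁, hb₂⟩ := hb
  obtain ⟨hc₁, hc₂⟩ := hc
  have hb₀ : 0 < b := hlo.trans_le hb₁
  have hc₀ : 0 < c := hlo.trans_le hc₁
  rw [sq, sq]
  exact ⟨div_le_div₀ (hlo.trans_le ha₁).le ha₁ (by positivity)
      (mul_le_mul hb₂ hc₂ hc₀.le (hb₀.le.trans hb₂)),
    div_le_div₀ (hlo.le.trans (ha₁.trans ha₂)) ha₂ (by positivity)
      (mul_le_mul hb₁ hc₁ hlo.le hb₀.le)⟩

theorem exp_one_lt_pi : exp 1 < π := by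
  linarith [exp_one_lt_d9, pi_gt_d6]

theorem exp_one_sq_le_three_mul_sqrt_two_mul_pi : exp 1 ^ 2 ≤ 3 * √(2 * π) := by
  have he : exp 1 ^ 2 < 7.39 := by nlinarith [exp_one_lt_d9, exp_pos 1]
  have hsqrt : 7.39 / 3 ≤ √(2 * π) := le_sqrt_of_sq_le (by nlinarith [pi_gt_d6])
  linarith

/-- Proposition 11: for positive integers `M, N`,
`(1/3)√((M+N)/(MN)) (M+N)^(M+N)/(M^M N^N) ≤ C(M+N, M) ≤ (1/2)√((M+N)/(MN)) (M+N)^(M+N)/(M^M N^N)`. -/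
theorem binomial_coefficient_estimate (M N : ℕ) (hM : 0 < M) (hN : 0 < N) :
    (1 / 3) * Real.sqrt (((M : ℝ) + N) / (M * N)) *
        (((M : ℝ) + N) ^ (M + N) / ((M : ℝ) ^ M * (N : ℝ) ^ N)) ≤
      (Nat.choose (M + N) M : ℝ) ∧
    (Nat.choose (M + N) M : ℝ) ≤
      (1 / 2) * Real.sqrt (((M : ℝ) + N) / (M * N)) *
        (((M : ℝ) + N) ^ (M + N) / ((M : ℝ) ^ M * (N : ℝ) ^ N)) := by
  obtain ⟨hlower, hupper⟩ := div_mul_mem_Icc_of_mem_Icc (by positivity)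
    (stirlingSeq_mem_Icc (n := M + N) (by omega)) (stirlingSeq_mem_Icc hM.ne')
    (stirlingSeq_mem_Icc hN.ne')
  have hlower_const : 1 / 3 ≤ √π / (exp 1 / √2) ^ 2 / √2 := by
    field_simp
    linarith [exp_one_sq_le_three_mul_sqrt_two_mul_pi, sqrt_mul zero_le_two π]
  have hupper_const : exp 1 / √2 / √π ^ 2 / √2 ≤ 1 / 2 := by
    rw [sq_sqrt pi_pos.le]
    field_simp
    rw [sq_sqrt zero_le_two]
    linarith [exp_one_lt_pi]
  rw [cast_choose_add_eq_stirlingSeq_div_mul hM.ne' hN.ne', mul_assoc, mul_assoc]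
  constructor
  · calc _ ≤ √π / (exp 1 / √2) ^ 2 / √2 * _ := by gcongr
      _ ≤ _ := by gcongr ?_ / _ * _
  · calc _ ≤ exp 1 / √2 / √π ^ 2 / √2 * _ := by gcongr ?_ / _ * _
      _ ≤ _ := by gcongr
end
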